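/- Let V ∈ L^p(ℝ³) ∩ L^q(ℝ³) with p < 3/2 < q. For λ₀ ∈ ℝ and r > 0, define K_r(ρ,x,y) := e^{−iλ₀(ρ−|x−y|)} V(x) · 2r·(χ̂(2r(ρ−|x−y|)) − χ̂(2rρ)) / |x−y| (the Fourier transform in λ, at ρ, of the kernel of χ((λ−λ₀)/2r)·VB⁺(λ), up to the factor 4π). Then there is a constant C, depending only on χ, such that for all x ≠ y ∈ ℝ³: ∫_ℝ |K_r(ρ,x,y)| dρ ≤ C |V(x)| · min(r, |x−y|^{−1}). -/

import Mathlib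

open MeasureTheory Complex

noncomputable section

abbrev E3 : Type := EuclideanSpace ℝ (Fin 3)

/-- Fourier transform on ℝ with the convention `ĝ(ρ) = ∫ e^{−iλρ} g(λ) dλ`,
applied to a real-valued function. -/
def hatR (g : ℝ → ℝ) (ρ : ℝ) : ℂ :=
  ∫ lam : ℝ, Complex.exp (-(Complex.I * lam * ρ)) * (g lam : ℂ)

/-- The kernel
`K_r(ρ,x,y) = e^{−iλ₀(ρ−|x−y|)} V(x) · 2r(χ̂(2r(ρ−|x−y|)) − χ̂(2rρ))/|x−y|`. -/
def Kker (χ : ℝ → ℝ) (V : E3 → ℝ) (lam0 r ρ : ℝ) (x y : E3) : ℂ :=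
  Complex.exp (-(Complex.I * lam0 * ((ρ : ℝ) - ‖x - y‖))) * (V x : ℂ) *
    (((2 * r : ℝ) : ℂ) * (hatR χ (2 * r * (ρ - ‖x - y‖)) - hatR χ (2 * r * ρ)) /
      ((‖x - y‖ : ℝ) : ℂ))


open scoped ContDiff SchwartzMap FourierTransform

open Real in
def toSchwartz (f : ℝ → ℂ) (hf : ContDiff ℝ ∞ f) (hsupp : HasCompactSupport f) :
    SchwartzMap ℝ ℂ where
  toFun := f
  smooth' := hf
  decay' := by
    intro k n
    have hg : HasCompactSupport (iteratedFDeriv ℝ n f) := hsupp.iteratedFDeriv n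
    have hsupp' : HasCompactSupport ((fun x : ℝ => ‖x‖ ^ k) * fun x => ‖iteratedFDeriv ℝ n f x‖) :=
      HasCompactSupport.mul_left hg.norm
    obtain ⟨C, hC⟩ := hsupp'.exists_bound_of_continuous
      ((continuous_norm.pow k).mul (hf.continuous_iteratedFDeriv (by exact_mod_cast le_top)).norm)
    refine ⟨C, fun x => ?_⟩
    have := hC x
    simp only [Pi.mul_apply, Real.norm_eq_abs] at this
    calc ‖x‖ ^ k * ‖iteratedFDeriv ℝ n f x‖ ≤ |‖x‖ ^ k * ‖iteratedFDeriv ℝ n f x‖| := le_abs_self _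
    _ ≤ C := this

open Real in
lemma translate_L1 (F F' : ℝ → ℂ) (hFi : Integrable F)
    (hder : ∀ s, HasDerivAt F (F' s) s) (hF'c : Continuous F') (hF'i : Integrable F')
    {τ : ℝ} (hτ : 0 ≤ τ) :
    (∫ s : ℝ, ‖F (s - τ) - F s‖) ≤ min (2 * ∫ s : ℝ, ‖F s‖) (τ * ∫ s : ℝ, ‖F' s‖) := by
  have hFt : Integrable (fun s => F (s - τ)) := hFi.comp_sub_right τ
  have hΔi : Integrable (fun s => F (s - τ) - F s) := hFt.sub hFi
  refine le_min ?_ ?_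
  · calc (∫ s : ℝ, ‖F (s - τ) - F s‖)
        ≤ ∫ s : ℝ, (‖F (s - τ)‖ + ‖F s‖) :=
          integral_mono hΔi.norm (hFt.norm.add hFi.norm) fun s => norm_sub_le _ _
      _ = (∫ s : ℝ, ‖F (s - τ)‖) + ∫ s : ℝ, ‖F s‖ := integral_add hFt.norm hFi.norm
      _ = 2 * ∫ s : ℝ, ‖F s‖ := by
          rw [integral_sub_right_eq_self (fun s => ‖F s‖) τ]; ring
  · -- pointwise FTC bound
    have key : ∀ s : ℝ, ‖F (s - τ) - F s‖ ≤ ∫ v in Set.Ioc (s - τ) s, ‖F' v‖ := by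
      intro s
      have hle : s - τ ≤ s := by linarith
      have h1 : ∫ v in (s - τ)..s, F' v = F s - F (s - τ) :=
        intervalIntegral.integral_eq_sub_of_hasDerivAt (fun x _ => hder x)
          (hF'c.intervalIntegrable _ _)
      have h2 : ‖F (s - τ) - F s‖ = ‖∫ v in (s - τ)..s, F' v‖ := by
        rw [h1, norm_sub_rev]
      rw [h2]
      have h3 := intervalIntegral.norm_integral_le_integral_norm (f := F') (μ := volume) hle
      have h4 : (∫ v in Set.Ioc (s - τ) s, ‖F' v‖) = ∫ v in (s - τ)..s, ‖F' v‖ :=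
        (intervalIntegral.integral_of_le hle).symm
      rw [h4]; exact h3
    -- lintegral computation
    set g : ℝ → ENNReal := fun v => ‖F' v‖₊ with hg_def
    have hgm : Measurable g := hF'c.measurable.nnnorm.coe_nnreal_ennreal
    have step1 : ∀ s : ℝ, (‖F (s - τ) - F s‖₊ : ENNReal) ≤ ∫⁻ v in Set.Ioc (s - τ) s, g v := by
      intro s
      have hIO : IntegrableOn (fun v => ‖F' v‖) (Set.Ioc (s - τ) s) := hF'i.norm.integrableOn
      have : ENNReal.ofReal (∫ v in Set.Ioc (s - τ) s, ‖F' v‖)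
          = ∫⁻ v in Set.Ioc (s - τ) s, ENNReal.ofReal ‖F' v‖ :=
        MeasureTheory.ofReal_integral_eq_lintegral_ofReal hIO
          (Filter.Eventually.of_forall fun v => norm_nonneg _)
      calc (‖F (s - τ) - F s‖₊ : ENNReal) = ENNReal.ofReal ‖F (s - τ) - F s‖ :=
            (ofReal_norm _).symm
        _ ≤ ENNReal.ofReal (∫ v in Set.Ioc (s - τ) s, ‖F' v‖) := ENNReal.ofReal_le_ofReal (key s)
        _ = ∫⁻ v in Set.Ioc (s - τ) s, ENNReal.ofReal ‖F' v‖ := this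
        _ = ∫⁻ v in Set.Ioc (s - τ) s, g v := by
            simp only [hg_def, ofReal_norm, enorm_eq_nnnorm]
    have swap : (∫⁻ s : ℝ, ∫⁻ v in Set.Ioc (s - τ) s, g v)
        = ENNReal.ofReal τ * ∫⁻ v, g v := by
      have hS : MeasurableSet {p : ℝ × ℝ | p.1 - τ < p.2 ∧ p.2 ≤ p.1} :=
        ((measurableSet_lt (measurable_fst.sub measurable_const) measurable_snd).inter
          (measurableSet_le measurable_snd measurable_fst))
      have hrepr : ∀ s : ℝ, (∫⁻ v in Set.Ioc (s - τ) s, g v)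
          = ∫⁻ v, Set.indicator {p : ℝ × ℝ | p.1 - τ < p.2 ∧ p.2 ≤ p.1}
              (fun p => g p.2) (s, v) := by
        intro s
        rw [← lintegral_indicator measurableSet_Ioc]
        rfl
      simp_rw [hrepr]
      rw [lintegral_lintegral_swap]
      · have inner : ∀ v : ℝ, (∫⁻ s : ℝ, Set.indicator {p : ℝ × ℝ | p.1 - τ < p.2 ∧ p.2 ≤ p.1}
            (fun p => g p.2) (s, v)) = g v * ENNReal.ofReal τ := by
          intro v
          have : (fun s : ℝ => Set.indicator {p : ℝ × ℝ | p.1 - τ < p.2 ∧ p.2 ≤ p.1}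
              (fun p => g p.2) (s, v)) = Set.indicator (Set.Ico v (v + τ)) (fun _ => g v) := by
            funext s
            have hiff : (s - τ < v ∧ v ≤ s) ↔ (v ≤ s ∧ s < v + τ) := by
              constructor <;> (rintro ⟨h1, h2⟩; exact ⟨by linarith, by linarith⟩)
            simp [Set.indicator_apply, Set.mem_setOf_eq, Set.mem_Ico, hiff]
          rw [this, lintegral_indicator measurableSet_Ico, setLIntegral_const,
            Real.volume_Ico]
          congr 1
          ring_nf
        simp_rw [inner]
        rw [lintegral_mul_const _ hgm, mul_comm]
      · exact ((hgm.comp measurable_snd).indicator hS).aemeasurable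
    -- put it together
    have hΔm := hΔi.aestronglyMeasurable
    rw [MeasureTheory.integral_norm_eq_lintegral_enorm hΔm]
    have hfin : (ENNReal.ofReal τ * ∫⁻ v, g v) ≠ ⊤ := by
      refine ENNReal.mul_ne_top ENNReal.ofReal_ne_top ?_
      rw [show (∫⁻ v, g v) = ∫⁻ v, ‖F' v‖ₑ from rfl, ← ofReal_integral_norm_eq_lintegral_enorm hF'i]
      exact ENNReal.ofReal_ne_top
    have hle2 : (∫⁻ s : ℝ, (‖F (s - τ) - F s‖₊ : ENNReal))
        ≤ ENNReal.ofReal τ * ∫⁻ v, g v := by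
      rw [← swap]; exact lintegral_mono step1
    calc (∫⁻ s : ℝ, (‖F (s - τ) - F s‖₊ : ENNReal)).toReal
        ≤ (ENNReal.ofReal τ * ∫⁻ v, g v).toReal := ENNReal.toReal_mono hfin hle2
      _ = τ * ∫ s : ℝ, ‖F' s‖ := by
          rw [show (∫⁻ v, g v) = ∫⁻ v, ‖F' v‖ₑ from rfl, ← ofReal_integral_norm_eq_lintegral_enorm hF'i, ← ENNReal.ofReal_mul hτ,
            ENNReal.toReal_ofReal (by positivity)]

open Real in
lemma hatR_props (χ : ℝ → ℝ) (hs : ContDiff ℝ ∞ fun t : ℝ => (χ t : ℂ))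
    (hc : HasCompactSupport fun t : ℝ => (χ t : ℂ)) :
    ∃ F' : ℝ → ℂ, Integrable (hatR χ) ∧ (∀ s, HasDerivAt (hatR χ) (F' s) s) ∧
      Continuous F' ∧ Integrable F' := by
  set ψ : 𝓢(ℝ, ℂ) := toSchwartz _ hs hc with hψ
  set Φ : 𝓢(ℝ, ℂ) := SchwartzMap.fourierTransformCLM ℂ ψ with hΦ
  set D : 𝓢(ℝ, ℂ) := SchwartzMap.derivCLM ℝ ℂ Φ with hD
  have h2π : (2 * π)⁻¹ ≠ 0 := inv_ne_zero (by positivity)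
  have key : hatR χ = fun s => Φ ((2 * π)⁻¹ * s) := by
    funext s
    have hΦapp : ∀ w : ℝ, Φ w = 𝓕 (fun t : ℝ => (χ t : ℂ)) w := fun w => rfl
    rw [hΦapp, Real.fourier_real_eq_integral_exp_smul, hatR]
    congr 1
    funext t
    rw [smul_eq_mul]
    congr 1
    have harg : -2 * π * t * ((2 * π)⁻¹ * s) = -(t * s) := by
      field_simp
    rw [harg]
    push_cast
    ring
  refine ⟨fun s => (2 * π)⁻¹ • D ((2 * π)⁻¹ * s), ?_, ?_, ?_, ?_⟩
  · rw [key]; exact Φ.integrable.comp_mul_left' h2π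
  · intro s
    have h1 : HasDerivAt (⇑Φ) (D ((2 * π)⁻¹ * s)) ((2 * π)⁻¹ * s) := by
      rw [hD, SchwartzMap.derivCLM_apply]
      exact (Φ.differentiable _).hasDerivAt
    have h2 : HasDerivAt (fun x : ℝ => (2 * π)⁻¹ * x) ((2 * π)⁻¹) s := by
      simpa using (hasDerivAt_id s).const_mul ((2 * π)⁻¹)
    have h3 := HasDerivAt.scomp s h1 h2
    rw [key]
    exact h3
  · exact (D.continuous.comp (continuous_const.mul continuous_id)).const_smul ((2 * π)⁻¹)
  · exact (D.integrable.comp_mul_left' h2π).smul ((2 * π)⁻¹)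

/-- there is a constant `C` depending only on `χ` such that for every
`λ₀ ∈ ℝ`, `r > 0` and `x ≠ y` in `ℝ³`,
`∫_ℝ |K_r(ρ,x,y)| dρ ≤ C |V(x)| min(r, |x−y|⁻¹)`. -/
theorem stmt_13 (p q : ℝ) (hp1 : 1 ≤ p) (hp : p < 3 / 2) (hq : 3 / 2 < q)
    (V : E3 → ℝ)
    (hVp : MemLp V (ENNReal.ofReal p) volume)
    (hVq : MemLp V (ENNReal.ofReal q) volume)
    (χ : ℝ → ℝ) (hχ_smooth : ContDiff ℝ (⊤ : ℕ∞) χ) (hχ_even : ∀ x, χ (-x) = χ x)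
    (hχ_one : ∀ x : ℝ, |x| ≤ 1 → χ x = 1) (hχ_zero : ∀ x : ℝ, 2 ≤ |x| → χ x = 0)
    (hχ_part : ∀ x ∈ Set.Icc (-1 : ℝ) 4, χ x + χ (x - 3) = 1) :
    ∃ C : ℝ, 0 < C ∧
      ∀ lam0 r : ℝ, 0 < r → ∀ x y : E3, x ≠ y →
        (∫ ρ : ℝ, ‖Kker χ V lam0 r ρ x y‖) ≤ C * |V x| * min r (‖x - y‖⁻¹) := by
  -- the complex-valued cutoff is smooth with compact support
  have hs : ContDiff ℝ ∞ fun t : ℝ => (χ t : ℂ) :=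
    Complex.ofRealCLM.contDiff.comp (hχ_smooth.of_le (by simp))
  have hcs : HasCompactSupport fun t : ℝ => (χ t : ℂ) := by
    apply HasCompactSupport.intro (isCompact_Icc (a := (-2 : ℝ)) (b := 2))
    intro t ht
    have : 2 ≤ |t| := by
      simp only [Set.mem_Icc, not_and_or, not_le] at ht
      rcases ht with h | h
      · rw [abs_of_neg (by linarith)]; linarith
      · rw [abs_of_pos (by linarith)]; linarith
    simp [hχ_zero t this]
  obtain ⟨F', hFi, hder, hF'c, hF'i⟩ := hatR_props χ hs hcs
  set F : ℝ → ℂ := hatR χ with hF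
  set A : ℝ := ∫ s : ℝ, ‖F s‖ with hA
  set B : ℝ := ∫ s : ℝ, ‖F' s‖ with hB
  have hA0 : 0 ≤ A := integral_nonneg fun s => norm_nonneg _
  have hB0 : 0 ≤ B := integral_nonneg fun s => norm_nonneg _
  refine ⟨2 * A + 2 * B + 1, by positivity, ?_⟩
  intro lam0 r hr x y hxy
  set d : ℝ := ‖x - y‖ with hd
  have hd0 : 0 < d := by
    rw [hd]; exact norm_pos_iff.mpr (sub_ne_zero.mpr hxy)
  set τ : ℝ := 2 * r * d with hτdef
  have hτ0 : 0 ≤ τ := by positivity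
  set φ : ℝ → ℝ := fun s => ‖F (s - τ) - F s‖ with hφ
  -- pointwise identity for the norm of the kernel
  have hpt : ∀ ρ : ℝ, ‖Kker χ V lam0 r ρ x y‖ = (|V x| * (2 * r) / d) * φ (2 * r * ρ) := by
    intro ρ
    have he : ‖Complex.exp (-(Complex.I * (lam0 : ℂ) * ((ρ : ℂ) - (d : ℂ))))‖ = 1 := by
      have h1 : (-(Complex.I * (lam0 : ℂ) * ((ρ : ℂ) - (d : ℂ))))
          = ((-(lam0 * (ρ - d)) : ℝ) : ℂ) * Complex.I := by push_cast; ring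
      rw [h1, Complex.norm_exp_ofReal_mul_I]
    have harg : 2 * r * (ρ - d) = 2 * r * ρ - τ := by rw [hτdef]; ring
    rw [Kker]
    simp only [← hd]
    rw [norm_mul, norm_mul, norm_div, he, one_mul, norm_mul, harg]
    simp only [Complex.norm_real, Real.norm_eq_abs]
    rw [abs_of_pos (by positivity : (0:ℝ) < 2 * r), abs_of_pos hd0]
    simp only [hφ, ← hF]
    field_simp
  -- integrate
  have hint : (∫ ρ : ℝ, ‖Kker χ V lam0 r ρ x y‖)
      = (|V x| * (2 * r) / d) * ((2 * r)⁻¹ * ∫ s : ℝ, φ s) := by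
    rw [show (fun ρ : ℝ => ‖Kker χ V lam0 r ρ x y‖)
        = fun ρ : ℝ => (|V x| * (2 * r) / d) * φ (2 * r * ρ) from funext hpt]
    rw [MeasureTheory.integral_const_mul]
    congr 1
    rw [MeasureTheory.Measure.integral_comp_mul_left φ (2 * r), smul_eq_mul,
      abs_of_pos (inv_pos.mpr (by positivity : (0:ℝ) < 2 * r))]
  have hJ : (∫ s : ℝ, φ s) ≤ min (2 * A) (τ * B) := by
    simpa only [hφ] using translate_L1 F F' hFi hder hF'c hF'i hτ0
  have hJ0 : 0 ≤ ∫ s : ℝ, φ s := integral_nonneg fun s => norm_nonneg _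
  rw [hint]
  have hLHS : (|V x| * (2 * r) / d) * ((2 * r)⁻¹ * ∫ s : ℝ, φ s)
      = |V x| * (∫ s : ℝ, φ s) / d := by
    field_simp
  rw [hLHS]
  rcases le_total r d⁻¹ with hcase | hcase
  · rw [min_eq_left hcase]
    have h1 : (∫ s : ℝ, φ s) ≤ τ * B := le_trans hJ (min_le_right _ _)
    calc |V x| * (∫ s : ℝ, φ s) / d ≤ |V x| * (τ * B) / d := by gcongr
      _ = 2 * B * (|V x| * r) := by rw [hτdef]; field_simp
      _ ≤ (2 * A + 2 * B + 1) * |V x| * r := by nlinarith [mul_nonneg (mul_nonneg hA0 (abs_nonneg (V x))) hr.le, mul_nonneg (abs_nonneg (V x)) hr.le]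
  · rw [min_eq_right hcase]
    have h1 : (∫ s : ℝ, φ s) ≤ 2 * A := le_trans hJ (min_le_left _ _)
    calc |V x| * (∫ s : ℝ, φ s) / d ≤ |V x| * (2 * A) / d := by gcongr
      _ = 2 * A * (|V x| * d⁻¹) := by field_simp
      _ ≤ (2 * A + 2 * B + 1) * |V x| * d⁻¹ := by
          nlinarith [mul_nonneg (mul_nonneg hB0 (abs_nonneg (V x))) (inv_pos.mpr hd0).le, mul_nonneg (abs_nonneg (V x)) (inv_pos.mpr hd0).le]
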